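/- arXiv:2007.03429 — 3 statements merged into one kernel-verified Lean document; each statement's English description precedes it below -/
import Mathlib

section
/- Let k be a field of characteristic zero, m ≥ 2, n = 2m-1, and D the derivation on k[x_1,…,x_n] with D(x_j) = (n-j)·x_{j+1} for j < n and D(x_n) = 0. Define f = (1/2)·∑_{i=1}^{2m-1} (-1)^{i-1}·C(2m-2, i-1)·x_i·x_{2m-i}. Then D(f) = 0. -/
open MvPolynomial

theorem aux (k : Type*) [Field k] [CharZero k] (n : ℕ)
    (D : Derivation k (MvPolynomial (Fin n) k) (MvPolynomial (Fin n) k))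
    (hD : ∀ j : Fin n, D (X j) =
      if h : (j : ℕ) + 1 < n then (n - ((j : ℕ) + 1)) • X (⟨(j : ℕ) + 1, h⟩ : Fin n) else 0) :
    D (∑ i : Fin n,
      (((-1:k) ^ (i : ℕ)) * (Nat.choose (n-1) (i : ℕ) : k)) • (X i * X i.rev)) = 0 := by
  classical
  set u : ℕ → MvPolynomial (Fin n) k := fun i =>
    if h : 0 < i ∧ i < n then
      (((-1:k)^i) * (Nat.choose (n-1) i : k) * (i : k)) •
        (X (⟨i, h.2⟩ : Fin n) * X (⟨n-i, by omega⟩ : Fin n)) else 0 with hu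
  have key : ∀ i : Fin n,
      (((-1:k) ^ (i : ℕ)) * (Nat.choose (n-1) (i : ℕ) : k)) • D (X i * X i.rev)
        = u (i : ℕ) - u ((i : ℕ) + 1) := by
    intro i
    have hi : (i:ℕ) < n := i.isLt
    have hrev : i.rev = ⟨n - ((i:ℕ)+1), by omega⟩ := Fin.ext (by simp [Fin.val_rev])
    rw [Derivation.leibniz, hD i, hrev, hD ⟨n - ((i:ℕ)+1), by omega⟩]
    by_cases h0 : 0 < (i:ℕ) <;> by_cases h1 : (i:ℕ)+1 < n
    · have hc1 : (n - ((i:ℕ)+1) : ℕ) + 1 < n := by omega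
      rw [dif_pos h1, dif_pos hc1]
      have e1 : n - ((i:ℕ)+1) + 1 = n - (i:ℕ) := by omega
      have e2 : n - (n - ((i:ℕ)+1) + 1) = (i:ℕ) := by omega
      simp only [e1, e2, hu]
      rw [dif_pos ⟨h0, hi⟩, dif_pos ⟨Nat.succ_pos _, h1⟩]
      have e3 : n - (n - (i:ℕ)) = (i:ℕ) := by omega
      have hch : ((n:k) - (((i:ℕ):k) + 1)) * ((n-1).choose (i:ℕ) : k)
          = (((i:ℕ):k) + 1) * ((n-1).choose ((i:ℕ)+1) : k) := by
        have h := Nat.choose_succ_right_eq (n-1) (i:ℕ)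
        have h2 : (n-1) - (i:ℕ) = n - ((i:ℕ)+1) := by omega
        rw [h2] at h
        have h3 := congrArg (Nat.cast : ℕ → k) h
        push_cast [Nat.cast_sub h1.le] at h3
        linear_combination -h3
      simp only [e3, Fin.eta, ← Nat.cast_smul_eq_nsmul k, smul_eq_mul, mul_smul_comm,
        smul_smul, smul_add]
      have hX : (X (⟨(i:ℕ)+1, h1⟩ : Fin n) : MvPolynomial (Fin n) k) * X ⟨n - ((i:ℕ)+1), by omega⟩
          = X ⟨n - ((i:ℕ)+1), by omega⟩ * X ⟨(i:ℕ)+1, h1⟩ := mul_comm _ _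
      rw [hX]
      match_scalars
      · ring
      · rw [pow_succ]
        push_cast [Nat.cast_sub h1.le]
        linear_combination ((-1:k)^((i:ℕ))) * hch
    · -- 0 < i, i = n-1
      have hc1 : n - ((i:ℕ)+1) + 1 < n := by omega
      rw [dif_neg h1, dif_pos hc1]
      have e1 : n - ((i:ℕ)+1) + 1 = n - (i:ℕ) := by omega
      have e2 : n - (n - ((i:ℕ)+1) + 1) = (i:ℕ) := by omega
      simp only [e1, e2, hu]
      rw [dif_pos ⟨h0, hi⟩, dif_neg (by omega : ¬(0 < (i:ℕ)+1 ∧ (i:ℕ)+1 < n))]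
      simp only [Fin.eta, ← Nat.cast_smul_eq_nsmul k, smul_eq_mul, mul_smul_comm, smul_smul,
        smul_add, smul_zero, mul_zero, add_zero, sub_zero]
      match_scalars
      rw [show n - (n - (i:ℕ)) = (i:ℕ) by omega]
    · -- i = 0, 1 < n
      have hrc : ¬ (n - ((i:ℕ)+1) + 1 < n) := by omega
      rw [dif_neg hrc, dif_pos h1]
      simp only [hu]
      rw [dif_neg (by omega : ¬(0 < (i:ℕ) ∧ (i:ℕ) < n)), dif_pos ⟨Nat.succ_pos _, h1⟩]
      have hch : ((n:k) - (((i:ℕ):k) + 1)) * ((n-1).choose (i:ℕ) : k)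
          = (((i:ℕ):k) + 1) * ((n-1).choose ((i:ℕ)+1) : k) := by
        have h := Nat.choose_succ_right_eq (n-1) (i:ℕ)
        have h2 : (n-1) - (i:ℕ) = n - ((i:ℕ)+1) := by omega
        rw [h2] at h
        have h3 := congrArg (Nat.cast : ℕ → k) h
        push_cast [Nat.cast_sub h1.le] at h3
        linear_combination -h3
      have hX : (X (⟨(i:ℕ)+1, h1⟩ : Fin n) : MvPolynomial (Fin n) k) * X ⟨n - ((i:ℕ)+1), by omega⟩
          = X ⟨n - ((i:ℕ)+1), by omega⟩ * X ⟨(i:ℕ)+1, h1⟩ := mul_comm _ _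
      simp only [← Nat.cast_smul_eq_nsmul k, smul_eq_mul, mul_smul_comm, smul_smul,
        smul_add, smul_zero, mul_zero, zero_add, zero_sub]
      rw [hX]
      match_scalars
      rw [pow_succ]
      push_cast [Nat.cast_sub h1.le]
      linear_combination ((-1:k)^((i:ℕ))) * hch
    · -- i = 0, n = 1
      have hrc : ¬ (n - ((i:ℕ)+1) + 1 < n) := by omega
      rw [dif_neg hrc, dif_neg h1]
      simp only [hu]
      rw [dif_neg (by omega : ¬(0 < (i:ℕ) ∧ (i:ℕ) < n)),
        dif_neg (by omega : ¬(0 < (i:ℕ)+1 ∧ (i:ℕ)+1 < n))]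
      simp
  rw [map_sum]
  calc (∑ i : Fin n, D ((((-1:k) ^ (i : ℕ)) * (Nat.choose (n-1) (i : ℕ) : k)) • (X i * X i.rev)))
      = ∑ i : Fin n, (u (i:ℕ) - u ((i:ℕ)+1)) := by
        refine Finset.sum_congr rfl fun i _ => ?_
        rw [Derivation.map_smul, key]
    _ = ∑ i ∈ Finset.range n, (u i - u (i+1)) := by
        exact Fin.sum_univ_eq_sum_range (fun j => u j - u (j+1)) n
    _ = u 0 - u n := Finset.sum_range_sub' u n
    _ = 0 := by simp [hu]

theorem D_kills_f (k : Type*) [Field k] [CharZero k] (m : ℕ) (hm : 2 ≤ m)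
    (D : Derivation k (MvPolynomial (Fin (2*m-1)) k) (MvPolynomial (Fin (2*m-1)) k))
    (hD : ∀ j : Fin (2*m-1), D (X j) =
      if h : (j : ℕ) + 1 < 2*m-1 then ((2*m-1) - ((j : ℕ) + 1)) • X (⟨(j : ℕ) + 1, h⟩ : Fin (2*m-1)) else 0)
    (f : MvPolynomial (Fin (2*m-1)) k)
    (hf : f = (2:k)⁻¹ • ∑ i : Fin (2*m-1),
      (((-1:k) ^ (i : ℕ)) * (Nat.choose (2*m-2) (i : ℕ) : k)) • (X i * X i.rev)) :
    D f = 0 := by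
  have hn : 2*m-2 = (2*m-1) - 1 := by omega
  rw [hf, hn, Derivation.map_smul, aux k (2*m-1) D hD, smul_zero]
end

section
/- Let k be a field of characteristic zero, m ≥ 2, n = 2m-1, and D' the derivation on k[x_1,…,x_n] with D'(x_j) = (j-1)·x_{j-1} for j ≥ 2 and D'(x_1) = 0. Define f = (1/2)·∑_{i=1}^{2m-1} (-1)^{i-1}·C(2m-2, i-1)·x_i·x_{2m-i}. Then D'(f) = 0. -/
/-!
Put `G j = (-1)^j j C(n, j) x_{j-1} x_{n-j}` with `n = 2m - 2`. By the Leibniz rule and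
`(i + 1) C(n, i + 1) = (n - i) C(n, i)`, the derivation maps the `i`-th summand
`(-1)^i C(n, i) x_i x_{n-i}` of `2f` to `G i - G (i + 1)`, so `D' (2f)` telescopes to
`G 0 - G (n + 1)`, and both ends vanish.
-/

open MvPolynomial Finset

section

variable {R A : Type*} [CommRing R] [CommRing A] [Algebra R A] {D : Derivation R A A}
  {x : ℕ → A} {n : ℕ}

variable (R x n) in
def telescopingTerm (j : ℕ) : A :=
  ((-1 : R) ^ j * (n.choose j * j : ℕ)) • (x (j - 1) * x (n - j))

-- At `j = 0` the hypothesis `D (x j) = j • x (j - 1)` reads `D (x 0) = 0`.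
theorem Derivation.apply_mul_complement (hD : ∀ j ≤ n, D (x j) = j • x (j - 1)) {i : ℕ}
    (hi : i ≤ n) :
    D (x i * x (n - i)) = i • (x (i - 1) * x (n - i)) + (n - i) • (x i * x (n - i - 1)) := by
  rw [leibniz, hD i hi, hD (n - i) (Nat.sub_le n i)]
  simp only [smul_eq_mul, nsmul_eq_mul]
  ring

theorem Derivation.smul_apply_mul_complement (hD : ∀ j ≤ n, D (x j) = j • x (j - 1)) {i : ℕ}
    (hi : i ≤ n) :
    ((-1 : R) ^ i * n.choose i) • D (x i * x (n - i)) =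
      telescopingTerm R x n i - telescopingTerm R x n (i + 1) := by
  rw [D.apply_mul_complement hD hi, telescopingTerm, telescopingTerm, Nat.choose_succ_right_eq,
    Nat.add_sub_cancel, Nat.sub_add_eq, ← Nat.cast_smul_eq_nsmul R i,
    ← Nat.cast_smul_eq_nsmul R (n - i), Nat.cast_mul, Nat.cast_mul]
  module

theorem Derivation.apply_sum_neg_one_pow_mul_choose_smul
    (hD : ∀ j ≤ n, D (x j) = j • x (j - 1)) :
    D (∑ i ∈ range (n + 1), ((-1 : R) ^ i * n.choose i) • (x i * x (n - i))) = 0 := by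
  calc D (∑ i ∈ range (n + 1), ((-1 : R) ^ i * n.choose i) • (x i * x (n - i)))
      = ∑ i ∈ range (n + 1), (telescopingTerm R x n i - telescopingTerm R x n (i + 1)) := by
        rw [map_sum]
        refine sum_congr rfl fun i hi => ?_
        rw [map_smul, D.smul_apply_mul_complement hD (Nat.lt_succ_iff.mp (mem_range.mp hi))]
    _ = telescopingTerm R x n 0 - telescopingTerm R x n (n + 1) := sum_range_sub' _ _
    _ = 0 := by simp [telescopingTerm]

end

theorem D'_kills_f (k : Type*) [Field k] (m : ℕ) (hm : 2 ≤ m)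
    (D' : Derivation k (MvPolynomial (Fin (2*m-1)) k) (MvPolynomial (Fin (2*m-1)) k))
    (hD' : ∀ j : Fin (2*m-1), D' (X j) =
      if h : 0 < (j : ℕ) then (j : ℕ) • X (⟨(j : ℕ) - 1, by omega⟩ : Fin (2*m-1)) else 0)
    (f : MvPolynomial (Fin (2*m-1)) k)
    (hf : f = (2:k)⁻¹ • ∑ i : Fin (2*m-1),
      (((-1:k) ^ (i : ℕ)) * (Nat.choose (2*m-2) (i : ℕ) : k)) • (X i * X i.rev)) :
    D' f = 0 := by
  set x : ℕ → MvPolynomial (Fin (2*m-1)) k := fun j => if h : j < 2*m-1 then X ⟨j, h⟩ else 0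
  have hX : ∀ i : Fin (2*m-1), X i = x i := fun i => by simp only [x, dif_pos i.isLt]
  have hD'x : ∀ j ≤ 2*m-2, D' (x j) = j • x (j - 1) := by
    intro j hj
    rw [← hX ⟨j, by omega⟩, hD']
    rcases Nat.eq_zero_or_pos j with rfl | hj0
    · simp
    · rw [dif_pos hj0, hX]
  have hsum : ∑ i : Fin (2*m-1), ((-1:k) ^ (i : ℕ) * (2*m-2).choose i) • (X i * X i.rev) =
      ∑ i ∈ range (2*m-2+1), ((-1:k) ^ i * (2*m-2).choose i) • (x i * x (2*m-2-i)) := by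
    rw [show 2*m-2+1 = 2*m-1 by omega, ← Fin.sum_univ_eq_sum_range]
    refine Fintype.sum_congr _ _ fun i => ?_
    rw [hX, hX, Fin.val_rev, show 2*m-1 - (i + 1) = 2*m-2 - i by omega]
  rw [hf, D'.map_smul, hsum, Derivation.apply_sum_neg_one_pow_mul_choose_smul hD'x, smul_zero]
end

section
/- Let k have characteristic zero, m ≥ 2, and on k[x_1,…,x_{2m}] let D(x_j) = (2m-j)·x_{j+1} for j < 2m, D(x_{2m}) = 0. Let f' = (1/2)·∑_{i=1}^{2m-1} (-1)^{i-1}·C(2m-2, i-1)·x_i·x_{2m-i} (a polynomial in x_1,…,x_{2m-1}). Then D^3(f') = 0. -/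
open MvPolynomial Finset

section aux
variable (k : Type*) [Field k] [CharZero k] (m : ℕ)

noncomputable def Yv (a : ℕ) : MvPolynomial (Fin (2*m)) k :=
  if h : a < 2*m then X ⟨a, h⟩ else 0

def wv (a : ℕ) : k := (2*m : k) - ((a : k) + 1)

def q1 (n i : ℕ) : k :=
  (-1)^i * (n.choose i) * ((n:k)+1-i) * ((n:k)-i) * ((n:k)-1-i)
def q2 (n i : ℕ) : k :=
  3 * ((-1)^i * (n.choose i) * ((n:k)+1-i) * ((n:k)-i) * ((i:k)+1))
def q3 (n i : ℕ) : k :=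
  3 * ((-1)^i * (n.choose i) * ((n:k)+1-i) * ((i:k)+1) * (i:k))
def q4 (n i : ℕ) : k :=
  (-1)^i * (n.choose i) * ((i:k)+1) * (i:k) * ((i:k)-1)

lemma keyK (n j : ℕ) :
    ((j:k)+1) * (n.choose (j+1) : k) = ((n:k) - j) * (n.choose j : k) := by
  rcases lt_or_ge j n with h | h
  · have hnat := Nat.choose_succ_right_eq n j
    have h2 : ((n.choose (j+1) : k) * ((j:k)+1)) = (n.choose j : k) * (((n:k) - (j:k))) := by
      have := congrArg (fun t : ℕ => (t : k)) hnat
      push_cast [Nat.cast_sub h.le] at this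
      linear_combination this
    linear_combination h2
  · rcases eq_or_lt_of_le h with h' | h'
    · subst h'
      simp [Nat.choose_eq_zero_of_lt]
    · simp [Nat.choose_eq_zero_of_lt h', Nat.choose_eq_zero_of_lt (by omega : n < j+1)]

lemma mainId (n i : ℕ) :
    q1 k n i + q2 k n (i+1) + q3 k n (i+2) + q4 k n (i+3) = 0 := by
  have K0 := keyK k n i
  have K1 := keyK k n (i+1)
  have K2 := keyK k n (i+2)
  push_cast at K0 K1 K2 ⊢
  simp only [q1, q2, q3, q4]
  push_cast
  set x := (i:k)
  set N := (n:k)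
  linear_combination ((-1:k)^i) * ((-(N-1-x)*(N+1-x)) * K0
    + (3*(N-1-x)*(x+3) - (x+4)*(N-2-x)) * K1
    + (-(x+4)*(x+2)) * K2)

lemma boundId (n : ℕ) : q2 k n 0 + q3 k n 1 + q4 k n 2 = 0 := by
  have K0 := keyK k n 0
  have K1 := keyK k n 1
  simp only [q2, q3, q4]
  have hC0 : (n.choose 0 : k) = 1 := by simp
  push_cast at K0 K1 ⊢
  linear_combination (-(3*(n:k)+3)) * K0 + 3 * K1

end aux

set_option linter.unusedSectionVars false
section der
variable {k : Type*} [Field k] [CharZero k] {m : ℕ}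
variable (D : Derivation k (MvPolynomial (Fin (2*m)) k) (MvPolynomial (Fin (2*m)) k))
variable (hD : ∀ j : Fin (2*m), D (X j) =
      if h : (j : ℕ) + 1 < 2*m then ((2*m) - ((j : ℕ) + 1)) • X (⟨(j : ℕ) + 1, h⟩ : Fin (2*m)) else 0)

include hD

lemma hDY (a : ℕ) : D (Yv k m a) = wv k m a • Yv k m (a+1) := by
  unfold Yv wv
  by_cases h : a < 2*m
  · rw [dif_pos h, hD ⟨a, h⟩]
    by_cases h2 : a + 1 < 2*m
    · rw [dif_pos h2, dif_pos h2]
      rw [← Nat.cast_smul_eq_nsmul k]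
      congr 1
      push_cast [Nat.cast_sub (by omega : a+1 ≤ 2*m)]
      ring
    · rw [dif_neg h2, dif_neg h2, smul_zero]
  · rw [dif_neg h, dif_neg (by omega : ¬ (a+1 < 2*m)), map_zero, smul_zero]

lemma D1mul (a b : ℕ) : D (Yv k m a * Yv k m b) =
    wv k m a • (Yv k m (a+1) * Yv k m b) + wv k m b • (Yv k m a * Yv k m (b+1)) := by
  rw [Derivation.leibniz, hDY D hD, hDY D hD]
  rw [smul_comm, smul_comm (Yv k m b)]
  simp only [smul_eq_mul]
  ring_nf

lemma D3mul (a b : ℕ) : (⇑D)^[3] (Yv k m a * Yv k m b) =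
    (wv k m a * wv k m (a+1) * wv k m (a+2)) • (Yv k m (a+3) * Yv k m b)
    + (3 * (wv k m a * wv k m (a+1) * wv k m b)) • (Yv k m (a+2) * Yv k m (b+1))
    + (3 * (wv k m a * wv k m b * wv k m (b+1))) • (Yv k m (a+1) * Yv k m (b+2))
    + (wv k m b * wv k m (b+1) * wv k m (b+2)) • (Yv k m a * Yv k m (b+3)) := by
  simp only [Function.iterate_succ, Function.iterate_zero, Function.comp_apply, id_eq,
    D1mul D hD, map_add, Derivation.map_smul]
  module

end der

noncomputable section Sdefs
variable (k : Type*) [Field k] [CharZero k] (m n : ℕ)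

def S1 (i : ℕ) : MvPolynomial (Fin (2*m)) k := q1 k n i • (Yv k m (i+3) * Yv k m (n-i))
def S2 (i : ℕ) : MvPolynomial (Fin (2*m)) k := q2 k n i • (Yv k m (i+2) * Yv k m (n-i+1))
def S3 (i : ℕ) : MvPolynomial (Fin (2*m)) k := q3 k n i • (Yv k m (i+1) * Yv k m (n-i+2))
def S4 (i : ℕ) : MvPolynomial (Fin (2*m)) k := q4 k n i • (Yv k m i * Yv k m (n-i+3))

end Sdefs

lemma shift_one {M : Type*} [AddCommGroup M] (N : ℕ) (f : ℕ → M) (hf : f (N+1) = 0) :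
    ∑ i ∈ range (N+1), f i = (∑ i ∈ range (N+1), f (i+1)) + f 0 := by
  have h1 := Finset.sum_range_succ f (N+1)
  rw [hf, add_zero] at h1
  rw [← h1, Finset.sum_range_succ']

set_option maxHeartbeats 2000000 in
theorem D_cubed_kills_f' (k : Type*) [Field k] [CharZero k] (m : ℕ) (hm : 2 ≤ m)
    (D : Derivation k (MvPolynomial (Fin (2*m)) k) (MvPolynomial (Fin (2*m)) k))
    (hD : ∀ j : Fin (2*m), D (X j) =
      if h : (j : ℕ) + 1 < 2*m then ((2*m) - ((j : ℕ) + 1)) • X (⟨(j : ℕ) + 1, h⟩ : Fin (2*m)) else 0)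
    (f' : MvPolynomial (Fin (2*m)) k)
    (hf' : f' = (2:k)⁻¹ • ∑ i : Fin (2*m),
      (((-1:k) ^ (i : ℕ)) * (Nat.choose (2*m-2) (i : ℕ) : k)) •
        (X i * X (⟨2*m-2-(i : ℕ), by omega⟩ : Fin (2*m)))) :
    (⇑D)^[3] f' = 0 := by
  obtain ⟨n, hn⟩ : ∃ n, n = 2*m-2 := ⟨_, rfl⟩
  have hn2m : 2*m = n + 2 := by omega
  have hn2 : 2 ≤ n := by omega
  have hY : ∀ (a : ℕ) (h : a < 2*m), Yv k m a = X ⟨a, h⟩ := fun a h => dif_pos h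
  have hY0 : ∀ (a : ℕ), ¬ (a < 2*m) → Yv k m a = 0 := fun a h => dif_neg h
  have hf2 : f' = (2:k)⁻¹ • ∑ i ∈ range (n+1),
      (((-1:k)^i * (n.choose i : k)) • (Yv k m i * Yv k m (n - i))) := by
    rw [hf']
    congr 1
    calc (∑ i : Fin (2*m), (((-1:k) ^ (i : ℕ)) * (Nat.choose (2*m-2) (i : ℕ) : k)) •
        (X i * X (⟨2*m-2-(i : ℕ), by omega⟩ : Fin (2*m))))
        = ∑ i : Fin (2*m), (fun j : ℕ =>
            (((-1:k)^j * (n.choose j : k)) • (Yv k m j * Yv k m (n - j)))) (i : ℕ) := by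
          refine Finset.sum_congr rfl (fun i _ => ?_)
          simp only
          congr 1
          · rw [hn]
          · rw [hY (i:ℕ) i.isLt, hY (n - (i:ℕ)) (by omega)]
            congr 1
            exact congrArg X (by simp only [Fin.mk.injEq]; omega)
      _ = ∑ j ∈ range (2*m), (((-1:k)^j * (n.choose j : k)) • (Yv k m j * Yv k m (n - j))) :=
          Fin.sum_univ_eq_sum_range (fun j : ℕ =>
            (((-1:k)^j * (n.choose j : k)) • (Yv k m j * Yv k m (n - j)))) (2*m)
      _ = ∑ j ∈ range (n+2), (((-1:k)^j * (n.choose j : k)) • (Yv k m j * Yv k m (n - j))) :=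
          Finset.sum_congr (by rw [hn2m]) (fun x _ => rfl)
      _ = ∑ j ∈ range (n+1), (((-1:k)^j * (n.choose j : k)) • (Yv k m j * Yv k m (n - j))) := by
          rw [Finset.sum_range_succ, Nat.choose_eq_zero_of_lt (by omega : n < n+1)]
          simp
  -- linearity of the iterate
  have hlin : ∀ (c : k) (x : MvPolynomial (Fin (2*m)) k),
      (⇑D)^[3] (c • x) = c • (⇑D)^[3] x := by
    intro c x
    simp [Function.iterate_succ_apply', Derivation.map_smul]
  have hsum3 : (⇑D)^[3] (∑ i ∈ range (n+1),
        (((-1:k)^i * (n.choose i : k)) • (Yv k m i * Yv k m (n - i))))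
      = ∑ i ∈ range (n+1),
        (⇑D)^[3] (((-1:k)^i * (n.choose i : k)) • (Yv k m i * Yv k m (n - i))) := by
    simp [Function.iterate_succ_apply', map_sum]
  -- per-term expansion
  have h2m : (2:k) * (m:k) = (n:k) + 2 := by exact_mod_cast congrArg (fun t : ℕ => (t:k)) hn2m
  have hw : ∀ j : ℕ, wv k m j = (n:k) + 1 - (j:k) := by
    intro j; unfold wv; push_cast; linear_combination h2m
  have hterm : ∀ i ∈ range (n+1),
      (⇑D)^[3] (((-1:k)^i * (n.choose i : k)) • (Yv k m i * Yv k m (n - i)))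
      = S1 k m n i + S2 k m n i + S3 k m n i + S4 k m n i := by
    intro i hi
    have hi' : i ≤ n := by simpa [Nat.lt_succ_iff] using Finset.mem_range.mp hi
    have hcast : ((n - i : ℕ) : k) = (n:k) - (i:k) := Nat.cast_sub hi'
    rw [hlin, D3mul D hD]
    rw [smul_add, smul_add, smul_add, smul_smul, smul_smul, smul_smul, smul_smul]
    unfold S1 S2 S3 S4
    congr 1
    congr 1
    congr 1
    · congr 1
      simp only [hw, q1]
      push_cast [hcast]
      ring
    · congr 1
      simp only [hw, q2]
      push_cast [hcast]
      ring
    · congr 1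
      simp only [hw, q3]
      push_cast [hcast]
      ring
    · congr 1
      simp only [hw, q4]
      push_cast [hcast]
      ring
  rw [hf2, hlin, hsum3, Finset.sum_congr rfl hterm]
  -- reduce to showing the inner sum is zero
  suffices hz : (∑ i ∈ range (n+1),
      (S1 k m n i + S2 k m n i + S3 k m n i + S4 k m n i)) = 0 by
    rw [hz, smul_zero]
  rw [Finset.sum_add_distrib, Finset.sum_add_distrib, Finset.sum_add_distrib]
  -- shift the sums
  have hz2top : S2 k m n (n+1) = 0 := by
    simp [S2, q2, Nat.choose_eq_zero_of_lt (show n < n+1 by omega)]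
  have hz3a : S3 k m n (n+1) = 0 := by
    simp [S3, q3, Nat.choose_eq_zero_of_lt (show n < n+1 by omega)]
  have hz3b : S3 k m n (n+1+1) = 0 := by
    simp [S3, q3, Nat.choose_eq_zero_of_lt (show n < n+1+1 by omega)]
  have hz4a : S4 k m n (n+1) = 0 := by
    simp [S4, q4, Nat.choose_eq_zero_of_lt (show n < n+1 by omega)]
  have hz4b : S4 k m n (n+1+1) = 0 := by
    simp [S4, q4, Nat.choose_eq_zero_of_lt (show n < n+1+1 by omega)]
  have hz4c : S4 k m n (n+1+1+1) = 0 := by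
    simp [S4, q4, Nat.choose_eq_zero_of_lt (show n < n+1+1+1 by omega)]
  have hS2 : ∑ i ∈ range (n+1), S2 k m n i
      = (∑ i ∈ range (n+1), S2 k m n (i+1)) + S2 k m n 0 :=
    shift_one n _ hz2top
  have hS3 : ∑ i ∈ range (n+1), S3 k m n i
      = ((∑ i ∈ range (n+1), S3 k m n (i+1+1)) + S3 k m n 1) + S3 k m n 0 := by
    calc ∑ i ∈ range (n+1), S3 k m n i
        = (∑ i ∈ range (n+1), S3 k m n (i+1)) + S3 k m n 0 := shift_one n _ hz3a
      _ = ((∑ i ∈ range (n+1), S3 k m n (i+1+1)) + S3 k m n 1) + S3 k m n 0 :=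
        congrArg (fun t => t + S3 k m n 0)
          (shift_one n (fun i => S3 k m n (i+1)) hz3b)
  have hS4 : ∑ i ∈ range (n+1), S4 k m n i
      = (((∑ i ∈ range (n+1), S4 k m n (i+1+1+1)) + S4 k m n 2) + S4 k m n 1) + S4 k m n 0 := by
    calc ∑ i ∈ range (n+1), S4 k m n i
        = (∑ i ∈ range (n+1), S4 k m n (i+1)) + S4 k m n 0 := shift_one n _ hz4a
      _ = ((∑ i ∈ range (n+1), S4 k m n (i+1+1)) + S4 k m n 1) + S4 k m n 0 :=
        congrArg (fun t => t + S4 k m n 0)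
          (shift_one n (fun i => S4 k m n (i+1)) hz4b)
      _ = (((∑ i ∈ range (n+1), S4 k m n (i+1+1+1)) + S4 k m n 2) + S4 k m n 1) + S4 k m n 0 :=
        congrArg (fun t => (t + S4 k m n 1) + S4 k m n 0)
          (shift_one n (fun i => S4 k m n (i+1+1)) hz4c)
  -- boundary terms
  have hYn2 : Yv k m (n+2) = 0 := hY0 _ (by omega)
  have hYn3 : Yv k m (n+3) = 0 := hY0 _ (by omega)
  have hb30 : S3 k m n 0 = 0 := by
    simp [S3, hYn2]
  have hb40 : S4 k m n 0 = 0 := by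
    simp [S4, hYn3]
  have hb41 : S4 k m n 1 = 0 := by
    unfold S4
    rw [show n - 1 + 3 = n + 2 from by omega, hYn2]
    simp
  have hbound : S2 k m n 0 + S3 k m n 1 + S4 k m n 2 = 0 := by
    have e1 : S2 k m n 0 = q2 k n 0 • (Yv k m 2 * Yv k m (n+1)) := by
      unfold S2; norm_num
    have e2 : S3 k m n 1 = q3 k n 1 • (Yv k m 2 * Yv k m (n+1)) := by
      unfold S3
      rw [show n - 1 + 2 = n + 1 from by omega]
    have e3 : S4 k m n 2 = q4 k n 2 • (Yv k m 2 * Yv k m (n+1)) := by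
      unfold S4
      rw [show n - 2 + 3 = n + 1 from by omega]
    rw [e1, e2, e3, ← add_smul, ← add_smul, boundId k n, zero_smul]
  -- interior terms
  have hint : ∀ i ∈ range (n+1),
      S1 k m n i + S2 k m n (i+1) + S3 k m n (i+1+1) + S4 k m n (i+1+1+1) = 0 := by
    intro i hi
    have hi' : i ≤ n := by simpa [Nat.lt_succ_iff] using Finset.mem_range.mp hi
    simp only [show i+1+1 = i+2 from rfl, show i+1+1+1 = i+3 from rfl]
    have e2 : S2 k m n (i+1) = q2 k n (i+1) • (Yv k m (i+3) * Yv k m (n-i)) := by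
      unfold S2
      by_cases h : i < n
      · rw [show i+1+2 = i+3 from rfl, show n - (i+1) + 1 = n - i from by omega]
      · have hq : q2 k n (i+1) = 0 := by
          simp [q2, Nat.choose_eq_zero_of_lt (show n < i+1 by omega)]
        rw [hq, zero_smul, zero_smul]
    have e3 : S3 k m n (i+2) = q3 k n (i+2) • (Yv k m (i+3) * Yv k m (n-i)) := by
      unfold S3
      by_cases h : i + 2 ≤ n
      · rw [show i+2+1 = i+3 from rfl, show n - (i+2) + 2 = n - i from by omega]
      · have hq : q3 k n (i+2) = 0 := by
          simp [q3, Nat.choose_eq_zero_of_lt (show n < i+2 by omega)]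
        rw [hq, zero_smul, zero_smul]
    have e4 : S4 k m n (i+3) = q4 k n (i+3) • (Yv k m (i+3) * Yv k m (n-i)) := by
      unfold S4
      by_cases h : i + 3 ≤ n
      · rw [show n - (i+3) + 3 = n - i from by omega]
      · have hq : q4 k n (i+3) = 0 := by
          simp [q4, Nat.choose_eq_zero_of_lt (show n < i+3 by omega)]
        rw [hq, zero_smul, zero_smul]
    rw [e2, e3, e4]
    unfold S1
    rw [← add_smul, ← add_smul, ← add_smul, mainId k n i, zero_smul]
  have hsum0 : ∑ i ∈ range (n+1),
      (S1 k m n i + S2 k m n (i+1) + S3 k m n (i+1+1) + S4 k m n (i+1+1+1)) = 0 :=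
    Finset.sum_eq_zero hint
  rw [Finset.sum_add_distrib, Finset.sum_add_distrib, Finset.sum_add_distrib] at hsum0
  rw [hS2, hS3, hS4, hb30, hb40, hb41, add_zero, add_zero, add_zero]
  have hre : (∑ i ∈ range (n+1), S1 k m n i)
      + ((∑ i ∈ range (n+1), S2 k m n (i+1)) + S2 k m n 0)
      + ((∑ i ∈ range (n+1), S3 k m n (i+1+1)) + S3 k m n 1)
      + ((∑ i ∈ range (n+1), S4 k m n (i+1+1+1)) + S4 k m n 2)
      = ((∑ i ∈ range (n+1), S1 k m n i)
        + (∑ i ∈ range (n+1), S2 k m n (i+1))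
        + (∑ i ∈ range (n+1), S3 k m n (i+1+1))
        + (∑ i ∈ range (n+1), S4 k m n (i+1+1+1)))
        + (S2 k m n 0 + S3 k m n 1 + S4 k m n 2) := by abel
  rw [hre, hsum0, hbound]
  simp
end
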